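/- arXiv:1004.0364 — 5 statements merged into one kernel-verified Lean document; each statement's English description precedes it below -/
import Mathlib

section
/- Let ρ : F[x₁,…,xₙ] → F[z₁,…,zₙ] be the algebra homomorphism sending x_i ↦ z_i − z_avg, where z_avg = (z₁+⋯+zₙ)/n. Then the kernel of ρ is the ideal generated by x_avg = (x₁+⋯+xₙ)/n (equivalently, the ideal generated by x₁+⋯+xₙ). -/
open MvPolynomial

theorem Finset.sum_sub_mul_sum_eq_zero {ι A : Type*} [CommRing A] (s : Finset ι) (x : ι → A)
    {c : A} (hc : (s.card : A) * c = 1) : ∑ i ∈ s, (x i - c * ∑ j ∈ s, x j) = 0 := by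
  rw [Finset.sum_sub_distrib, Finset.sum_const, nsmul_eq_mul, ← mul_assoc, hc, one_mul, sub_self]

/-- A substitution that fixes every variable modulo `I` acts trivially modulo `I`. -/
theorem MvPolynomial.ker_aeval_le_of_forall_sub_X_mem {R σ : Type*} [CommRing R]
    {f : σ → MvPolynomial σ R} {I : Ideal (MvPolynomial σ R)} (hf : ∀ i, f i - X i ∈ I) :
    RingHom.ker (aeval f) ≤ I := by
  have hcomp : (Ideal.Quotient.mkₐ R I).comp (aeval f) = Ideal.Quotient.mkₐ R I :=
    algHom_ext fun i => by
      simpa [Ideal.Quotient.mk_eq_mk_iff_sub_mem] using hf i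
  intro p hp
  rw [← Ideal.Quotient.eq_zero_iff_mem, ← Ideal.Quotient.mkₐ_eq_mk R, ← hcomp,
    AlgHom.comp_apply, RingHom.mem_ker.mp hp, map_zero]

theorem stmt_0 (F : Type*) [Field F] [CharZero F] (n : ℕ) (hn : 0 < n) :
    RingHom.ker (aeval (R := F)
        (fun i : Fin n => X i - C ((n : F)⁻¹) * ∑ j : Fin n, X j) :
      MvPolynomial (Fin n) F →ₐ[F] MvPolynomial (Fin n) F) =
    Ideal.span {∑ i : Fin n, (X i : MvPolynomial (Fin n) F)} := by
  have hcard : ((Finset.univ : Finset (Fin n)).card : MvPolynomial (Fin n) F) *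
      C ((n : F)⁻¹) = 1 := by
    rw [Finset.card_univ, Fintype.card_fin, ← map_natCast C, ← C_mul,
      mul_inv_cancel₀ (Nat.cast_ne_zero.mpr hn.ne'), C_1]
  apply le_antisymm
  · refine ker_aeval_le_of_forall_sub_X_mem fun i => ?_
    rw [sub_sub_cancel_left]
    exact neg_mem (Ideal.mul_mem_left _ _ (Ideal.subset_span rfl))
  · rw [Ideal.span_le, Set.singleton_subset_iff, SetLike.mem_coe, RingHom.mem_ker, map_sum]
    simp only [aeval_X]
    exact Finset.sum_sub_mul_sum_eq_zero _ _ hcard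
end

section
/- The algebra homomorphism F[w₂,…,wₙ] → R defined by w_k ↦ (z₁−z_avg)^k + ⋯ + (zₙ−z_avg)^k for 2 ≤ k ≤ n (where z_avg = (z₁+⋯+zₙ)/n) is an algebra isomorphism onto R. -/
/-!
The power sums `p₁, …, pₙ` generate the symmetric polynomials, as the elementary symmetric
polynomials do (Newton's identities); by the binomial theorem so do the mean and the centered
power sums `q₂, …, qₙ` (note `q₁ = 0`). A family of `n` elements generating the same algebra as
`n` algebraically independent ones is itself algebraically independent, because a surjective
endomorphism of the Noetherian ring `F[w₁, …, wₙ]` is injective. Finally, a symmetric translation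
invariant polynomial is unchanged by `zᵢ ↦ zᵢ - mean`, which kills the mean and fixes every `qₖ`,
so it lies in the algebra generated by `q₂, …, qₙ`.
-/

open MvPolynomial

/-- A polynomial is translation invariant if substituting `zᵢ ↦ zᵢ + c` fixes it for all `c`. -/
def TransInv {F : Type*} [CommSemiring F] {n : ℕ} (p : MvPolynomial (Fin n) F) : Prop :=
  ∀ c : F, aeval (fun i : Fin n => X i + C c) p = p

open Set Algebra

theorem RingHom.injective_of_surjective_of_isNoetherianRing {R : Type*} [CommRing R]
    [IsNoetherianRing R] (f : R →+* R) (hf : Function.Surjective f) : Function.Injective f := by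
  have hmono : Monotone fun k : ℕ => RingHom.ker (f ^ k) :=
    monotone_nat_of_le_succ fun k x hx => by
      rw [RingHom.mem_ker, RingHom.coe_pow] at hx ⊢
      rw [Function.iterate_succ_apply', hx, map_zero]
  obtain ⟨N, hN⟩ := monotone_stabilizes_iff_noetherian.mpr ‹_› ⟨_, hmono⟩
  rw [injective_iff_map_eq_zero]
  intro a ha
  obtain ⟨b, rfl⟩ := (hf.iterate N) a
  have hb : b ∈ RingHom.ker (f ^ (N + 1)) := by
    rwa [RingHom.mem_ker, RingHom.coe_pow, Function.iterate_succ_apply']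
  have hker : RingHom.ker (f ^ N) = RingHom.ker (f ^ (N + 1)) := hN (N + 1) N.le_succ
  rwa [← hker, RingHom.mem_ker, RingHom.coe_pow] at hb

/-- Writing `y = x ∘ θ` for an endomorphism `θ` of the polynomial ring, the hypothesis makes `θ`
surjective, hence injective by Noetherianity. -/
theorem AlgebraicIndependent.of_adjoin_range_eq {ι R A : Type*} [Finite ι] [CommRing R]
    [IsNoetherianRing R] [CommRing A] [Algebra R A] {x y : ι → A}
    (hx : AlgebraicIndependent R x) (h : adjoin R (range x) = adjoin R (range y)) :
    AlgebraicIndependent R y := by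
  rw [adjoin_range_eq_range_aeval, adjoin_range_eq_range_aeval] at h
  have hy : ∀ i, ∃ p, aeval (R := R) x p = y i := fun i => by
    rw [← AlgHom.mem_range, h]; exact ⟨X i, aeval_X _ _⟩
  choose θ hθ using hy
  have hcomp : aeval (R := R) y = (aeval x).comp (aeval θ) := by
    rw [comp_aeval]; exact congrArg aeval (funext fun i => (hθ i).symm)
  have hsurj : Function.Surjective (aeval (R := R) θ) := by
    rw [← AlgHom.range_eq_top, _root_.eq_top_iff, ← adjoin_range_X, adjoin_le_iff]
    rintro _ ⟨i, rfl⟩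
    obtain ⟨p, hp⟩ : x i ∈ (aeval (R := R) y).range := by
      rw [← h]; exact ⟨X i, aeval_X _ _⟩
    refine ⟨p, hx ?_⟩
    rw [aeval_X, ← hp]
    exact (AlgHom.congr_fun hcomp p).symm
  rw [AlgebraicIndependent, hcomp, AlgHom.coe_comp]
  exact Function.Injective.comp hx
    (RingHom.injective_of_surjective_of_isNoetherianRing (aeval θ).toRingHom hsurj)

theorem Finset.sum_add_pow {ι R : Type*} [CommSemiring R] (s : Finset ι) (a : ι → R) (b : R)
    (k : ℕ) :
    ∑ i ∈ s, (a i + b) ^ k =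
      ∑ j ∈ Finset.range (k + 1), (∑ i ∈ s, a i ^ j) * b ^ (k - j) * k.choose j := by
  simp_rw [add_pow, Finset.sum_mul]
  exact Finset.sum_comm

namespace MvPolynomial

section Symmetric

variable (n : ℕ) (R : Type*) [CommRing R]

theorem algebraicIndependent_esymm :
    AlgebraicIndependent R fun i : Fin n => esymm (Fin n) R (i + 1) := by
  intro p q hpq
  apply esymmAlgHom_fin_injective R le_rfl
  ext1
  rwa [esymmAlgHom_apply, esymmAlgHom_apply]

theorem adjoin_range_esymm :
    adjoin R (range fun i : Fin n => esymm (Fin n) R (i + 1)) = symmetricSubalgebra (Fin n) R := by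
  ext p
  rw [adjoin_range_eq_range_aeval, AlgHom.mem_range]
  constructor
  · rintro ⟨q, rfl⟩
    rw [← esymmAlgHom_apply]
    exact (esymmAlgHom (Fin n) R n q).2
  · intro hp
    obtain ⟨q, hq⟩ := esymmAlgHom_fin_surjective R le_rfl ⟨p, hp⟩
    exact ⟨q, by rw [← esymmAlgHom_apply, hq]⟩

end Symmetric

theorem psum_mem_adjoin_psum {n : ℕ} {R : Type*} [CommSemiring R] {k : ℕ} (hk : k ≤ n) :
    psum (Fin n) R k ∈ adjoin R (range fun i : Fin n => psum (Fin n) R (i + 1)) := by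
  rcases k with _ | k
  · rw [psum_zero]
    exact Subalgebra.natCast_mem _ _
  · exact subset_adjoin ⟨⟨k, hk⟩, rfl⟩

section PowerSums

variable {n : ℕ} {F : Type*} [Field F] [CharZero F]

theorem esymm_mem_adjoin_psum {k : ℕ} (hk : k ≤ n) :
    esymm (Fin n) F k ∈ adjoin F (range fun i : Fin n => psum (Fin n) F (i + 1)) := by
  induction k using Nat.strong_induction_on with
  | _ k ih =>
    have hnewton : k * esymm (Fin n) F k ∈
        adjoin F (range fun i : Fin n => psum (Fin n) F (i + 1)) := by
      have hsign : ∀ j : ℕ, (-1 : MvPolynomial (Fin n) F) ^ j ∈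
          adjoin F (range fun i : Fin n => psum (Fin n) F (i + 1)) := fun j =>
        Subalgebra.pow_mem _ (Subalgebra.neg_mem _ (Subalgebra.one_mem _)) j
      rw [mul_esymm_eq_sum]
      refine Subalgebra.mul_mem _ (hsign _) (Subalgebra.sum_mem _ fun a ha => ?_)
      rw [Finset.mem_filter, Finset.HasAntidiagonal.mem_antidiagonal] at ha
      exact Subalgebra.mul_mem _ (Subalgebra.mul_mem _ (hsign _) (ih a.1 ha.2 (by omega)))
        (psum_mem_adjoin_psum (by omega))
    rcases k.eq_zero_or_pos with rfl | hk0
    · rw [esymm_zero]; exact Subalgebra.one_mem _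
    have hinv : esymm (Fin n) F k = algebraMap F _ (k : F)⁻¹ * (k * esymm (Fin n) F k) := by
      rw [← mul_assoc, ← map_natCast (algebraMap F (MvPolynomial (Fin n) F)), ← map_mul,
        inv_mul_cancel₀ (Nat.cast_ne_zero.mpr hk0.ne'), map_one, one_mul]
    rw [hinv]
    exact Subalgebra.mul_mem _ (Subalgebra.algebraMap_mem _ _) hnewton

variable (n F)

theorem adjoin_range_psum :
    adjoin F (range fun i : Fin n => psum (Fin n) F (i + 1)) = symmetricSubalgebra (Fin n) F := by
  apply le_antisymm
  · rw [adjoin_le_iff]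
    rintro _ ⟨i, rfl⟩
    exact psum_isSymmetric _ _ _
  · rw [← adjoin_range_esymm, adjoin_le_iff]
    rintro _ ⟨i, rfl⟩
    exact esymm_mem_adjoin_psum i.isLt

theorem algebraicIndependent_psum :
    AlgebraicIndependent F fun i : Fin n => psum (Fin n) F (i + 1) :=
  (algebraicIndependent_esymm n F).of_adjoin_range_eq <| by
    rw [adjoin_range_esymm, adjoin_range_psum]

end PowerSums


noncomputable section Centered

variable (n : ℕ) (F : Type*) [Field F]

def mean : MvPolynomial (Fin n) F := C (n : F)⁻¹ * ∑ j, X j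

def centeredPsum (k : ℕ) : MvPolynomial (Fin n) F := ∑ i, (X i - mean n F) ^ k

theorem psum_eq_sum_centeredPsum (k : ℕ) :
    psum (Fin n) F k =
      ∑ j ∈ Finset.range (k + 1), centeredPsum n F j * mean n F ^ (k - j) * k.choose j := by
  simp_rw [centeredPsum, ← Finset.sum_add_pow, sub_add_cancel, psum]

theorem centeredPsum_eq_sum_psum (k : ℕ) :
    centeredPsum n F k =
      ∑ j ∈ Finset.range (k + 1), psum (Fin n) F j * (-mean n F) ^ (k - j) * k.choose j := by
  simp_rw [centeredPsum, sub_eq_add_neg, Finset.sum_add_pow, psum]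

variable {n F}

theorem centeredPsum_one (hn : (n : F) ≠ 0) : centeredPsum n F 1 = 0 := by
  rw [centeredPsum, Finset.sum_congr rfl fun _ _ => pow_one _, Finset.sum_sub_distrib,
    Finset.sum_const, Finset.card_univ, Fintype.card_fin, nsmul_eq_mul, mean, ← mul_assoc,
    ← map_natCast C, ← map_mul, mul_inv_cancel₀ hn, map_one, one_mul, sub_self]

def translate (t : MvPolynomial (Fin n) F) : MvPolynomial (Fin n) F →ₐ[F] MvPolynomial (Fin n) F :=
  aeval fun i => X i + t

theorem translate_X (t : MvPolynomial (Fin n) F) (i : Fin n) : translate t (X i) = X i + t :=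
  aeval_X _ _

theorem translate_mean (hn : (n : F) ≠ 0) (t : MvPolynomial (Fin n) F) :
    translate t (mean n F) = mean n F + t := by
  simp only [mean, map_mul, map_sum, translate_X, Finset.sum_add_distrib, Finset.sum_const,
    Finset.card_univ, Fintype.card_fin, nsmul_eq_mul, mul_add]
  rw [translate, aeval_C, algebraMap_eq, ← mul_assoc, ← map_natCast C, ← map_mul,
    inv_mul_cancel₀ hn, map_one, one_mul]

theorem translate_centeredPsum (hn : (n : F) ≠ 0) (t : MvPolynomial (Fin n) F) (k : ℕ) :
    translate t (centeredPsum n F k) = centeredPsum n F k := by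
  simp only [centeredPsum, map_sum, map_pow, map_sub, translate_X, translate_mean hn,
    add_sub_add_right_eq_sub]

theorem eval_translate (x : Fin n → F) (t p : MvPolynomial (Fin n) F) :
    eval x (translate t p) = eval (fun i => x i + eval x t) p := by
  rw [translate, aeval_eq_bind₁, ← aeval_eq_eval, ← aeval_eq_eval, aeval_bind₁]
  simp [aeval_eq_eval]

/-- Translation invariance under constant shifts gives invariance under every polynomial shift,
since both sides agree at each point of the infinite field. -/
theorem translate_eq_self_of_transInv [Infinite F] {p : MvPolynomial (Fin n) F} (hp : TransInv p)
    (t : MvPolynomial (Fin n) F) : translate t p = p :=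
  MvPolynomial.funext fun x => by
    have h : eval x (translate (C (eval x t)) p) = eval x p := congrArg (eval x) (hp _)
    rwa [eval_translate, eval_C, ← eval_translate] at h

theorem transInv_of_mem_adjoin_centeredPsum (hn : (n : F) ≠ 0) {p : MvPolynomial (Fin n) F}
    (hp : p ∈ adjoin F (range (centeredPsum n F))) : TransInv p := fun c =>
  adjoin_le (S := AlgHom.equalizer (translate (C c)) (AlgHom.id F _))
    (by rintro _ ⟨k, rfl⟩; exact translate_centeredPsum hn _ k) hp

end Centered

noncomputable section MeanAndCenteredPsums

variable (m : ℕ) (F : Type*) [Field F]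

def meanAndCenteredPsums : Fin (m + 1) → MvPolynomial (Fin (m + 1)) F :=
  Fin.cons (mean (m + 1) F) fun k : Fin m => centeredPsum (m + 1) F (k + 2)

variable {m F}

theorem mean_mem_adjoin_psum :
    mean (m + 1) F ∈ adjoin F (range fun i : Fin (m + 1) => psum (Fin (m + 1)) F (i + 1)) := by
  rw [mean, ← psum_one, ← algebraMap_eq]
  exact Subalgebra.mul_mem _ (Subalgebra.algebraMap_mem _ _) (psum_mem_adjoin_psum (by omega))

theorem centeredPsum_mem_adjoin_psum {k : ℕ} (hk : k ≤ m + 1) :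
    centeredPsum (m + 1) F k ∈
      adjoin F (range fun i : Fin (m + 1) => psum (Fin (m + 1)) F (i + 1)) := by
  rw [centeredPsum_eq_sum_psum]
  refine Subalgebra.sum_mem _ fun j hj => Subalgebra.mul_mem _ (Subalgebra.mul_mem _ ?_ ?_)
    (Subalgebra.natCast_mem _ _)
  · exact psum_mem_adjoin_psum (by rw [Finset.mem_range] at hj; omega)
  · exact Subalgebra.pow_mem _ (Subalgebra.neg_mem _ mean_mem_adjoin_psum) _

variable [CharZero F]

theorem centeredPsum_mem_adjoin_meanAndCenteredPsums {k : ℕ} (hk : k ≤ m + 1) :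
    centeredPsum (m + 1) F k ∈ adjoin F (range (meanAndCenteredPsums m F)) := by
  match k, hk with
  | 0, _ =>
    rw [centeredPsum, Finset.sum_congr rfl fun _ _ => pow_zero _]
    exact Subalgebra.sum_mem _ fun _ _ => Subalgebra.one_mem _
  | 1, _ =>
    rw [centeredPsum_one (Nat.cast_ne_zero.mpr m.succ_ne_zero)]
    exact Subalgebra.zero_mem _
  | j + 2, hj => exact subset_adjoin ⟨Fin.succ ⟨j, by omega⟩, Fin.cons_succ _ _ _⟩

theorem psum_mem_adjoin_meanAndCenteredPsums {k : ℕ} (hk : k ≤ m + 1) :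
    psum (Fin (m + 1)) F k ∈ adjoin F (range (meanAndCenteredPsums m F)) := by
  rw [psum_eq_sum_centeredPsum]
  refine Subalgebra.sum_mem _ fun j hj => Subalgebra.mul_mem _ (Subalgebra.mul_mem _ ?_ ?_)
    (Subalgebra.natCast_mem _ _)
  · exact centeredPsum_mem_adjoin_meanAndCenteredPsums (by rw [Finset.mem_range] at hj; omega)
  · have hmean : mean (m + 1) F ∈ adjoin F (range (meanAndCenteredPsums m F)) :=
      subset_adjoin ⟨0, Fin.cons_zero _ _⟩
    exact Subalgebra.pow_mem _ hmean _

variable (m F)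

theorem adjoin_range_meanAndCenteredPsums :
    adjoin F (range (meanAndCenteredPsums m F)) = symmetricSubalgebra (Fin (m + 1)) F := by
  rw [← adjoin_range_psum]
  apply le_antisymm
  · rw [adjoin_le_iff]
    rintro _ ⟨i, rfl⟩
    refine Fin.cases ?_ (fun k => ?_) i
    · exact mean_mem_adjoin_psum
    · exact centeredPsum_mem_adjoin_psum (by omega)
  · rw [adjoin_le_iff]
    rintro _ ⟨i, rfl⟩
    exact psum_mem_adjoin_meanAndCenteredPsums i.isLt

theorem algebraicIndependent_meanAndCenteredPsums :
    AlgebraicIndependent F (meanAndCenteredPsums m F) :=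
  (algebraicIndependent_psum (m + 1) F).of_adjoin_range_eq <| by
    rw [adjoin_range_psum, adjoin_range_meanAndCenteredPsums]

variable {m F}

/-- Substituting `zᵢ ↦ zᵢ - mean` fixes a translation invariant `p`, kills the mean and fixes the
centered power sums. -/
theorem mem_adjoin_centeredPsum_of_isSymmetric_of_transInv {p : MvPolynomial (Fin (m + 1)) F}
    (hsym : p.IsSymmetric) (htr : TransInv p) :
    p ∈ adjoin F (range fun k : Fin m => centeredPsum (m + 1) F (k + 2)) := by
  have hn : ((m + 1 : ℕ) : F) ≠ 0 := Nat.cast_ne_zero.mpr m.succ_ne_zero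
  have hmap : (adjoin F (range (meanAndCenteredPsums m F))).map (translate (-mean (m + 1) F)) ≤
      adjoin F (range fun k : Fin m => centeredPsum (m + 1) F (k + 2)) := by
    rw [AlgHom.map_adjoin, adjoin_le_iff]
    rintro _ ⟨_, ⟨i, rfl⟩, rfl⟩
    induction i using Fin.cases with
    | zero =>
      rw [meanAndCenteredPsums, Fin.cons_zero, translate_mean hn, add_neg_cancel]
      exact Subalgebra.zero_mem _
    | succ k =>
      rw [meanAndCenteredPsums, Fin.cons_succ, translate_centeredPsum hn]
      exact subset_adjoin ⟨k, rfl⟩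
  rw [← translate_eq_self_of_transInv htr (-mean (m + 1) F)]
  refine hmap (Subalgebra.mem_map.mpr ⟨p, ?_, rfl⟩)
  rwa [adjoin_range_meanAndCenteredPsums]

variable (m F)

theorem coe_adjoin_centeredPsum :
    (adjoin F (range fun k : Fin m => centeredPsum (m + 1) F (k + 2)) :
        Set (MvPolynomial (Fin (m + 1)) F)) = {p | p.IsSymmetric ∧ TransInv p} := by
  ext p
  refine ⟨fun hp => ⟨?_, ?_⟩,
    fun hp => mem_adjoin_centeredPsum_of_isSymmetric_of_transInv hp.1 hp.2⟩
  · have hsub : adjoin F (range fun k : Fin m => centeredPsum (m + 1) F (k + 2)) ≤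
        adjoin F (range (meanAndCenteredPsums m F)) :=
      adjoin_mono (by rintro _ ⟨k, rfl⟩; exact ⟨k.succ, Fin.cons_succ _ _ _⟩)
    have := hsub hp
    rwa [adjoin_range_meanAndCenteredPsums] at this
  · exact transInv_of_mem_adjoin_centeredPsum (Nat.cast_ne_zero.mpr m.succ_ne_zero)
      (adjoin_mono (by rintro _ ⟨k, rfl⟩; exact ⟨_, rfl⟩) hp)

end MeanAndCenteredPsums

end MvPolynomial

theorem stmt_4 (F : Type*) [Field F] [CharZero F] (n : ℕ) (hn : 0 < n) :
    -- the algebra homomorphism `wₖ ↦ Σᵢ (zᵢ - z_avg)^k`, `2 ≤ k ≤ n`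
    -- (the variable `wₖ`, `2 ≤ k ≤ n`, is indexed by `k - 2 : Fin (n - 1)`):
    Function.Injective (⇑(aeval (R := F)
        (fun k : Fin (n - 1) => ∑ i : Fin n,
          (X i - C ((n : F)⁻¹) * ∑ j : Fin n, X j) ^ ((k : ℕ) + 2)) :
      MvPolynomial (Fin (n - 1)) F →ₐ[F] MvPolynomial (Fin n) F)) ∧
    Set.range (⇑(aeval (R := F)
        (fun k : Fin (n - 1) => ∑ i : Fin n,
          (X i - C ((n : F)⁻¹) * ∑ j : Fin n, X j) ^ ((k : ℕ) + 2)) :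
      MvPolynomial (Fin (n - 1)) F →ₐ[F] MvPolynomial (Fin n) F)) =
      {p : MvPolynomial (Fin n) F | p.IsSymmetric ∧ TransInv p} := by
  obtain ⟨m, rfl⟩ := Nat.exists_eq_add_one_of_ne_zero hn.ne'
  refine ⟨(algebraicIndependent_meanAndCenteredPsums m F).comp Fin.succ (Fin.succ_injective m), ?_⟩
  rw [← AlgHom.coe_range, ← adjoin_range_eq_range_aeval]
  exact coe_adjoin_centeredPsum m F
end

section
/- Let Δ = ∏_{i<j}(z_i − z_j) be the Vandermonde determinant and A the F-vector space of translation invariant antisymmetric polynomials in F[z₁,…,zₙ]. Then the linear map R → A given by q ↦ qΔ is a vector space isomorphism; moreover it maps the homogeneous degree-d part of R isomorphically onto the space of homogeneous translation invariant antisymmetric polynomials of degree d + n(n−1)/2. -/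
open MvPolynomial

/-- A polynomial is antisymmetric if every transposition of two variables negates it. -/
def Antisym {F : Type*} [CommRing F] {n : ℕ} (p : MvPolynomial (Fin n) F) : Prop :=
  ∀ i j : Fin n, i ≠ j → rename (Equiv.swap i j) p = -p

/-- The Vandermonde determinant `Δ = ∏_{i<j} (zᵢ - zⱼ)`. -/
noncomputable def vandermonde (F : Type*) [CommRing F] (n : ℕ) : MvPolynomial (Fin n) F :=
  ∏ q ∈ Finset.univ.filter (fun q : Fin n × Fin n => q.1 < q.2), (X q.1 - X q.2)

/-! The Vandermonde product `Δ` is antisymmetric, translation invariant, nonzero and homogeneous of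
degree `n(n-1)/2`, so `q ↦ qΔ` maps `R` injectively into `A` and adds `n(n-1)/2` to degrees.
Conversely, substituting `zⱼ ↦ zᵢ` in an antisymmetric `a` gives a polynomial equal to its own
negative, hence zero in characteristic `0`; so `a` is divisible by each of the pairwise
non-associated primes `zᵢ - zⱼ`, hence by `Δ`, and the quotient inherits symmetry and
translation invariance by cancelling `Δ` in the domain `F[z₁,…,zₙ]`. -/

open Finset

@[to_additive]
lemma Finset.prod_filter_fst_lt_snd {ι M : Type*} [Fintype ι] [LinearOrder ι]
    [LocallyFiniteOrderTop ι] [CommMonoid M] (g : ι × ι → M) :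
    ∏ q ∈ univ.filter (fun q : ι × ι => q.1 < q.2), g q = ∏ i, ∏ j ∈ Ioi i, g (i, j) := by
  rw [prod_filter, Fintype.prod_prod_type]
  refine prod_congr rfl fun i _ => ?_
  rw [← prod_filter, filter_lt_eq_Ioi]

lemma Fin.card_filter_fst_lt_snd (n : ℕ) :
    #(univ.filter fun q : Fin n × Fin n => q.1 < q.2) = n * (n - 1) / 2 := by
  rw [card_eq_sum_ones, sum_filter_fst_lt_snd]
  simp only [Finset.sum_const, smul_eq_mul, mul_one, Fin.card_Ioi]
  rw [Fin.sum_univ_eq_sum_range (fun i => n - 1 - i), sum_range_reflect (fun i => i) n,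
    sum_range_id]

lemma Finset.prod_dvd_of_forall_prime_dvd {ι M : Type*} [CommMonoidWithZero M] [IsCancelMulZero M]
    {s : Finset ι} {f : ι → M} (hprime : ∀ x ∈ s, Prime (f x))
    (hndvd : (s : Set ι).Pairwise fun x y => ¬ f x ∣ f y) {a : M}
    (hdvd : ∀ x ∈ s, f x ∣ a) : ∏ x ∈ s, f x ∣ a := by
  classical
  induction s using Finset.induction_on generalizing a with
  | empty => simp
  | insert x s hx ih =>
    obtain ⟨b, rfl⟩ := hdvd x (mem_insert_self x s)
    rw [prod_insert hx]
    refine mul_dvd_mul_left _ (ih (fun y hy => hprime y (mem_insert_of_mem hy))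
      (hndvd.mono (by simp)) fun y hy => ?_)
    have hyx : ¬ f y ∣ f x :=
      hndvd (by simp [hy]) (by simp) (by rintro rfl; exact hx hy)
    exact ((hprime y (mem_insert_of_mem hy)).dvd_or_dvd
      (hdvd y (mem_insert_of_mem hy))).resolve_left hyx

namespace MvPolynomial

variable {σ R : Type*}

section CommSemiring

variable [CommSemiring R]

attribute [local instance] MvPolynomial.gradedAlgebra in
lemma homogeneousComponent_add_mul_of_isHomogeneous {p q : MvPolynomial σ R} {N : ℕ}
    (hq : q.IsHomogeneous N) (e : ℕ) :
    homogeneousComponent (e + N) (p * q) = homogeneousComponent e p * q := by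
  have := DirectSum.coe_decompose_mul_of_right_mem_of_le (𝒜 := homogeneousSubmodule σ R)
    (a := p) hq (Nat.le_add_left N e)
  rwa [← DirectSum.Decomposition.decompose'_eq, decomposition.decompose'_apply,
    decomposition.decompose'_apply, Nat.add_sub_cancel] at this

lemma isSymmetric_of_forall_rename_swap [DecidableEq σ] [Finite σ] {p : MvPolynomial σ R}
    (h : ∀ i j : σ, i ≠ j → rename (Equiv.swap i j) p = p) : p.IsSymmetric := by
  intro e
  induction e using Equiv.Perm.swap_induction_on with
  | one => simp
  | swap_mul f i j hij hf => rw [Equiv.Perm.coe_mul, ← rename_rename, hf, h i j hij]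

end CommSemiring

variable [CommRing R]

lemma IsHomogeneous.of_mul_right [IsDomain R] {p q : MvPolynomial σ R} {d N : ℕ}
    (hq : q.IsHomogeneous N) (hq0 : q ≠ 0) (hpq : (p * q).IsHomogeneous (d + N)) :
    p.IsHomogeneous d := by
  have hp : homogeneousComponent d p = p := by
    refine mul_right_cancel₀ hq0 ?_
    rw [← homogeneousComponent_add_mul_of_isHomogeneous hq, homogeneousComponent_eq_self hpq]
  exact hp ▸ homogeneousComponent_isHomogeneous d p

section SubstVar

variable [DecidableEq σ]

noncomputable def substVar (i j : σ) : MvPolynomial σ R →ₐ[R] MvPolynomial σ R :=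
  aeval (Function.update X j (X i))

lemma substVar_X (i j k : σ) : substVar (R := R) i j (X k) = Function.update X j (X i) k :=
  aeval_X _ _

lemma substVar_rename_swap (i j : σ) (p : MvPolynomial σ R) :
    substVar i j (rename (Equiv.swap i j) p) = substVar i j p := by
  rw [substVar, aeval_rename]
  congr 1
  ext k
  rcases eq_or_ne k i with rfl | hki
  · by_cases hkj : k = j <;> simp [hkj]
  rcases eq_or_ne k j with rfl | hkj
  · simp [hki.symm]
  · simp [Equiv.swap_apply_of_ne_of_ne hki hkj, hkj]

-- View `p` as a polynomial `P` in `X j` over the other variables: this is `a - b ∣ P a - P b`.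
lemma X_sub_X_dvd_sub_substVar (i j : σ) (p : MvPolynomial σ R) :
    X j - X i ∣ p - substVar i j p := by
  let P : Polynomial (MvPolynomial σ R) :=
    aeval (Function.update (fun k => Polynomial.C (X k)) j Polynomial.X) p
  have hP : ∀ a, P.eval a = aeval (Function.update X j a) p := by
    intro a
    rw [← Polynomial.coe_aeval_eq_eval, ← AlgHom.coe_restrictScalars' R, ← AlgHom.comp_apply,
      comp_aeval]
    congr 1
    ext k
    by_cases hk : k = j <;> simp [hk]
  simpa [hP, substVar] using Polynomial.sub_dvd_eval_sub (X j) (X i) P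

lemma X_sub_X_dvd_iff_substVar_eq_zero {i j : σ} (hij : i ≠ j) (p : MvPolynomial σ R) :
    X i - X j ∣ p ↔ substVar i j p = 0 := by
  constructor
  · rintro ⟨c, rfl⟩
    simp [substVar_X, hij]
  · intro hp
    simpa [hp] using (X_sub_X_dvd_sub_substVar i j p).neg_left

lemma prime_X_sub_X [IsDomain R] {i j : σ} (hij : i ≠ j) :
    Prime (X i - X j : MvPolynomial σ R) := by
  refine ⟨sub_ne_zero.mpr fun h => hij (X_injective h), fun hunit => ?_, fun a b hab => ?_⟩
  · have := (X_sub_X_dvd_iff_substVar_eq_zero hij 1).mp hunit.dvd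
    simp at this
  · simp only [X_sub_X_dvd_iff_substVar_eq_zero hij, map_mul, mul_eq_zero] at hab ⊢
    exact hab

lemma X_sub_X_dvd_of_rename_swap_eq_neg [IsDomain R] [CharZero R] {i j : σ} (hij : i ≠ j)
    {p : MvPolynomial σ R} (hp : rename (Equiv.swap i j) p = -p) : X i - X j ∣ p := by
  rw [X_sub_X_dvd_iff_substVar_eq_zero hij]
  have := substVar_rename_swap (R := R) i j p
  rw [hp, map_neg] at this
  exact CharZero.neg_eq_self_iff.mp this

end SubstVar

lemma X_sub_X_not_dvd [LinearOrder σ] [Nontrivial R] {i j k l : σ} (hij : i < j) (hkl : k < l)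
    (hne : (i, j) ≠ (k, l)) : ¬ (X i - X j : MvPolynomial σ R) ∣ X k - X l := by
  rw [X_sub_X_dvd_iff_substVar_eq_zero hij.ne, map_sub, substVar_X, substVar_X, sub_eq_zero]
  simp only [Function.update_apply]
  split_ifs <;> intro h <;> have := X_injective h <;> grind

end MvPolynomial

lemma TransInv.mul {R : Type*} [CommSemiring R] {n : ℕ} {p q : MvPolynomial (Fin n) R}
    (hp : TransInv p) (hq : TransInv q) : TransInv (p * q) := by
  intro c
  rw [map_mul, hp c, hq c]

lemma TransInv.of_mul_right {R : Type*} [CommRing R] [IsDomain R] {n : ℕ}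
    {p q : MvPolynomial (Fin n) R} (hpq : TransInv (p * q)) (hq : TransInv q) (hq0 : q ≠ 0) :
    TransInv p := by
  intro c
  refine mul_right_cancel₀ hq0 ?_
  conv_rhs => rw [← hpq c, map_mul, hq c]

section Vandermonde

variable {R : Type*} [CommRing R] {n : ℕ}

lemma vandermonde_eq_neg_one_pow_mul_det :
    vandermonde R n = (-1) ^ (n * (n - 1) / 2) *
      (Matrix.vandermonde fun i : Fin n => (X i : MvPolynomial (Fin n) R)).det := by
  rw [Matrix.det_vandermonde, ← prod_filter_fst_lt_snd fun q : Fin n × Fin n =>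
    (X q.2 - X q.1 : MvPolynomial (Fin n) R), ← Fin.card_filter_fst_lt_snd, vandermonde,
    ← prod_neg]
  simp

lemma rename_swap_det_vandermonde {i j : Fin n} (hij : i ≠ j) :
    rename (Equiv.swap i j)
        (Matrix.vandermonde fun k : Fin n => (X k : MvPolynomial (Fin n) R)).det
      = -(Matrix.vandermonde fun k : Fin n => (X k : MvPolynomial (Fin n) R)).det := by
  rw [AlgHom.map_det]
  have hmap : (rename (R := R) (Equiv.swap i j)).mapMatrix
      (Matrix.vandermonde fun k : Fin n => (X k : MvPolynomial (Fin n) R))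
      = (Matrix.vandermonde fun k : Fin n => X k).submatrix (Equiv.swap i j) id := by
    ext a b
    simp [Matrix.vandermonde]
  rw [hmap, Matrix.det_permute, Equiv.Perm.sign_swap hij]
  simp

lemma rename_swap_vandermonde {i j : Fin n} (hij : i ≠ j) :
    rename (Equiv.swap i j) (vandermonde R n) = -vandermonde R n := by
  rw [vandermonde_eq_neg_one_pow_mul_det, map_mul, rename_swap_det_vandermonde hij]
  simp

lemma vandermonde_isHomogeneous : (vandermonde R n).IsHomogeneous (n * (n - 1) / 2) := by
  rw [vandermonde, ← Fin.card_filter_fst_lt_snd, card_eq_sum_ones]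
  exact IsHomogeneous.prod _ _ _ fun q _ => (isHomogeneous_X R q.1).sub (isHomogeneous_X R q.2)

lemma vandermonde_ne_zero [IsDomain R] : vandermonde R n ≠ 0 :=
  prod_ne_zero_iff.mpr fun _ hq =>
    sub_ne_zero.mpr fun h => (mem_filter.mp hq).2.ne (X_injective h)

lemma transInv_vandermonde : TransInv (vandermonde R n) := by
  intro c
  simp only [vandermonde, map_prod, map_sub, aeval_X, add_sub_add_right_eq_sub]

lemma vandermonde_dvd_of_antisym [IsDomain R] [CharZero R] {a : MvPolynomial (Fin n) R}
    (ha : Antisym a) : vandermonde R n ∣ a := by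
  exact prod_dvd_of_forall_prime_dvd (fun q hq => prime_X_sub_X (mem_filter.mp hq).2.ne)
    (fun _ hq _ hq' hne => X_sub_X_not_dvd (mem_filter.mp hq).2 (mem_filter.mp hq').2 hne)
    fun q hq => X_sub_X_dvd_of_rename_swap_eq_neg (mem_filter.mp hq).2.ne
      (ha _ _ (mem_filter.mp hq).2.ne)

lemma antisym_mul_vandermonde {q : MvPolynomial (Fin n) R} (hq : q.IsSymmetric) :
    Antisym (q * vandermonde R n) := by
  intro i j hij
  rw [map_mul, hq, rename_swap_vandermonde hij, mul_neg]

lemma isSymmetric_of_antisym_mul_vandermonde [IsDomain R] {q : MvPolynomial (Fin n) R}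
    (h : Antisym (q * vandermonde R n)) : q.IsSymmetric := by
  refine isSymmetric_of_forall_rename_swap fun i j hij => mul_right_cancel₀ vandermonde_ne_zero ?_
  have := h i j hij
  rwa [map_mul, rename_swap_vandermonde hij, mul_neg, neg_inj] at this

end Vandermonde

theorem stmt_6_general (F : Type*) [Field F] [CharZero F] (n : ℕ) :
    -- `q ↦ q·Δ` maps `R` into `A`:
    (∀ q : MvPolynomial (Fin n) F, q.IsSymmetric → TransInv q →
      Antisym (q * vandermonde F n) ∧ TransInv (q * vandermonde F n)) ∧
    -- and it is a linear bijection of `R` onto `A`: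
    (∀ a : MvPolynomial (Fin n) F, Antisym a → TransInv a →
      ∃! q : MvPolynomial (Fin n) F, q.IsSymmetric ∧ TransInv q ∧ q * vandermonde F n = a) ∧
    -- moreover it matches the degree-`d` part of `R` with the homogeneous translation
    -- invariant antisymmetric polynomials of degree `d + n(n-1)/2`:
    (∀ d : ℕ, ∀ q : MvPolynomial (Fin n) F, q.IsSymmetric → TransInv q →
      (q.IsHomogeneous d ↔ (q * vandermonde F n).IsHomogeneous (d + n * (n - 1) / 2))) := by
  refine ⟨fun q hsymm htrans => ⟨antisym_mul_vandermonde hsymm, htrans.mul transInv_vandermonde⟩,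
    fun a hanti htrans => ?_, fun d q _ _ => ?_⟩
  · obtain ⟨q, hq⟩ := vandermonde_dvd_of_antisym hanti
    rw [mul_comm] at hq
    subst hq
    refine ⟨q, ⟨isSymmetric_of_antisym_mul_vandermonde hanti,
      htrans.of_mul_right transInv_vandermonde vandermonde_ne_zero, rfl⟩, ?_⟩
    rintro q' ⟨-, -, hq'⟩
    exact mul_right_cancel₀ vandermonde_ne_zero hq'
  · exact ⟨fun h => h.mul vandermonde_isHomogeneous,
      IsHomogeneous.of_mul_right vandermonde_isHomogeneous vandermonde_ne_zero⟩

theorem stmt_6 (F : Type*) [Field F] [CharZero F] (n : ℕ) (hn : 0 < n) :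
    -- `q ↦ q·Δ` maps `R` into `A`:
    (∀ q : MvPolynomial (Fin n) F, q.IsSymmetric → TransInv q →
      Antisym (q * vandermonde F n) ∧ TransInv (q * vandermonde F n)) ∧
    -- and it is a linear bijection of `R` onto `A`:
    (∀ a : MvPolynomial (Fin n) F, Antisym a → TransInv a →
      ∃! q : MvPolynomial (Fin n) F, q.IsSymmetric ∧ TransInv q ∧ q * vandermonde F n = a) ∧
    -- moreover it matches the degree-`d` part of `R` with the homogeneous translation
    -- invariant antisymmetric polynomials of degree `d + n(n-1)/2`:
    (∀ d : ℕ, ∀ q : MvPolynomial (Fin n) F, q.IsSymmetric → TransInv q →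
      (q.IsHomogeneous d ↔ (q * vandermonde F n).IsHomogeneous (d + n * (n - 1) / 2))) :=
  stmt_6_general F n
end

section
/- For n ≤ 3: every nonzero homogeneous translation invariant symmetric polynomial in F[z₁,…,zₙ] is Haldane, i.e., its squeezing poset B(p) has a maximum element. -/
open MvPolynomial

/-- One squeeze: decrement an entry `a` and increment an entry `b` with `a > b + 1`. -/
def SqueezeStep (s t : Multiset ℕ) : Prop :=
  ∃ (u : Multiset ℕ) (a b : ℕ), b + 1 < a ∧ s = a ::ₘ b ::ₘ u ∧ t = (a - 1) ::ₘ (b + 1) ::ₘ u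

/-- The (strict) squeezing order: `t` is obtained from `s` by a nonempty sequence of squeezes. -/
def Squeezes (s t : Multiset ℕ) : Prop := Relation.TransGen SqueezeStep s t

/-- The multiset of exponents of a monomial. -/
def expMultiset {n : ℕ} (d : Fin n →₀ ℕ) : Multiset ℕ := Multiset.map d Finset.univ.val

/-- `B p`: the symmetrized monomials (identified with multisets of exponents) occurring
with nonzero coefficient in the symmetric polynomial `p`. -/
def BSet {F : Type*} [CommSemiring F] {n : ℕ} (p : MvPolynomial (Fin n) F) :
    Set (Multiset ℕ) :=
  {m | ∃ d : Fin n →₀ ℕ, expMultiset d = m ∧ coeff d p ≠ 0}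

/-- A symmetric polynomial is Haldane if its squeezing poset has a maximum. -/
def Haldane {F : Type*} [CommSemiring F] {n : ℕ} (p : MvPolynomial (Fin n) F) : Prop :=
  ∃ m ∈ BSet p, ∀ s ∈ BSet p, Relation.ReflTransGen SqueezeStep m s

/-!
Translation invariance says `∑ᵢ ∂ᵢ p = 0`, that is `∑ᵢ (eᵢ + 1) · coeff (e + δᵢ) p = 0` for every
exponent `e`. Let `m` be the largest exponent occurring in `p`; by symmetry some monomial
`z₀^m z₁^j z₂^k` occurs. For `n = 3` the relation at `(m, j, k - 1)`, whose `∂₀` term vanishes by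
maximality of `m`, moves a unit from the third exponent to the second, so `{m, d - m, 0} ∈ B(p)`.
Every element of `B(p)` has entries at most `m` and sum `d`, and all such multisets are reachable
from `{m, d - m, 0}` by squeezes. For `n ≤ 2` symmetry and homogeneity alone give the maximum.
-/

namespace MvPolynomial

section DiagShift

variable {σ R : Type*} [CommSemiring R]

noncomputable def diagShift : MvPolynomial σ R →ₐ[R] Polynomial (MvPolynomial σ R) :=
  aeval fun i => Polynomial.C (X i) + Polynomial.X

lemma diagShift_X (i : σ) :
    diagShift (X i : MvPolynomial σ R) = Polynomial.C (X i) + Polynomial.X :=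
  aeval_X _ i

lemma coeff_zero_diagShift (q : MvPolynomial σ R) : (diagShift q).coeff 0 = q := by
  induction q using MvPolynomial.induction_on with
  | C a => simp [diagShift, algebraMap_eq]
  | add p q hp hq => simp [hp, hq]
  | mul_X p i hp => simp [diagShift_X, hp]

lemma coeff_one_diagShift [Fintype σ] (q : MvPolynomial σ R) :
    (diagShift q).coeff 1 = ∑ i, pderiv i q := by
  classical
  induction q using MvPolynomial.induction_on with
  | C a => simp [diagShift, algebraMap_eq]
  | add p q hp hq => simp [hp, hq, Finset.sum_add_distrib]
  | mul_X p i hp =>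
    simp [diagShift_X, mul_add, hp, coeff_zero_diagShift, Finset.sum_add_distrib, Finset.mul_sum,
      pderiv_X, Pi.single_apply, mul_comm, add_comm]

lemma eval_diagShift (q r : MvPolynomial σ R) :
    (diagShift q).eval r = aeval (fun i => X i + r) q := by
  have h : ((Polynomial.aeval r).restrictScalars R).comp diagShift = aeval fun i => X i + r :=
    algHom_ext fun i => by simp [diagShift_X]
  rw [← Polynomial.coe_aeval_eq_eval, ← h]
  rfl

end DiagShift

lemma sum_coeff_add_single_mul_eq_zero {σ R : Type*} [CommSemiring R] [Fintype σ]
    {p : MvPolynomial σ R} (h : ∑ i, pderiv i p = 0) (e : σ →₀ ℕ) :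
    ∑ i, coeff (e + Finsupp.single i 1) p * (e i + 1) = 0 := by
  simpa [coeff_sum, coeff_pderiv] using congrArg (coeff e) h

lemma IsSymmetric.exists_coeff_ne_zero_forall_le {σ R : Type*} [CommSemiring R]
    {p : MvPolynomial σ R} (hsym : p.IsSymmetric) (hp : p ≠ 0) (j : σ) :
    ∃ e₀, coeff e₀ p ≠ 0 ∧ ∀ e, coeff e p ≠ 0 → ∀ i, e i ≤ e₀ j := by
  classical
  obtain ⟨e₀, he₀, hmax⟩ := p.support.exists_max_image (fun e => e j) (support_nonempty.mpr hp)
  refine ⟨e₀, mem_support_iff.mp he₀, fun e he i => ?_⟩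
  have hswap : coeff (Finsupp.mapDomain (Equiv.swap i j) e) p ≠ 0 := by
    rwa [← hsym (Equiv.swap i j), coeff_rename_mapDomain _ (Equiv.injective _)]
  simpa [Finsupp.mapDomain_equiv_apply] using hmax _ (mem_support_iff.mpr hswap)

lemma IsHomogeneous.sum_apply_eq {σ R : Type*} [CommSemiring R] [Fintype σ]
    {p : MvPolynomial σ R} {d : ℕ} (hp : p.IsHomogeneous d) {e : σ →₀ ℕ} (he : coeff e p ≠ 0) :
    ∑ i, e i = d := by
  rw [← Finsupp.degree_eq_sum, Finsupp.degree_eq_weight_one]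
  exact hp he

end MvPolynomial

lemma TransInv.diagShift_eq_C {R : Type*} [CommRing R] [IsDomain R] [Infinite R] {n : ℕ}
    {p : MvPolynomial (Fin n) R} (hp : TransInv p) : diagShift p = Polynomial.C p := by
  refine Polynomial.eq_of_infinite_eval_eq _ _ ((Set.infinite_range_of_injective
    (C_injective (Fin n) R)).mono ?_)
  rintro _ ⟨c, rfl⟩
  simpa [eval_diagShift] using hp c

lemma TransInv.sum_pderiv_eq_zero {R : Type*} [CommRing R] [IsDomain R] [Infinite R] {n : ℕ}
    {p : MvPolynomial (Fin n) R} (hp : TransInv p) : ∑ i, pderiv i p = 0 := by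
  rw [← coeff_one_diagShift, hp.diagShift_eq_C, Polynomial.coeff_C_of_ne_zero one_ne_zero]

section Squeezing

open Relation

lemma SqueezeStep.cons {s t : Multiset ℕ} (c : ℕ) (h : SqueezeStep s t) :
    SqueezeStep (c ::ₘ s) (c ::ₘ t) := by
  obtain ⟨u, a, b, hab, rfl, rfl⟩ := h
  refine ⟨c ::ₘ u, a, b, hab, ?_, ?_⟩ <;> simp only [Multiset.cons_swap c]

lemma reflTransGen_squeezeStep_cons {s t : Multiset ℕ} (c : ℕ)
    (h : ReflTransGen SqueezeStep s t) : ReflTransGen SqueezeStep (c ::ₘ s) (c ::ₘ t) :=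
  h.lift (c ::ₘ ·) fun _ _ => SqueezeStep.cons c

lemma reflTransGen_squeezeStep_pair {x y : ℕ} :
    ∀ {a b : ℕ}, x ≤ a → y ≤ a → x + y = a + b →
      ReflTransGen SqueezeStep {a, b} {x, y}
  | 0, b, hx, hy, hs => by
    obtain ⟨rfl, rfl, rfl⟩ : x = 0 ∧ y = 0 ∧ b = 0 := by omega
    rfl
  | a + 1, b, hx, hy, hs => by
    obtain rfl | hx := eq_or_lt_of_le hx
    · obtain rfl : b = y := by omega
      rfl
    obtain rfl | hy := eq_or_lt_of_le hy
    · obtain rfl : b = x := by omega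
      rw [Multiset.pair_comm]
    exact .head ⟨0, a + 1, b, by omega, rfl, rfl⟩
      (reflTransGen_squeezeStep_pair (by omega) (by omega) (by omega))

lemma reflTransGen_squeezeStep_triple_of_le_left {a b x y z : ℕ} (hx : x ≤ a) (hy : y ≤ x)
    (hz : z ≤ x) (hs : x + y + z = a + b) :
    ReflTransGen SqueezeStep {a, b, 0} {x, y, z} := by
  by_cases hbx : b ≤ x
  · have hab : ReflTransGen SqueezeStep {a, b} {x, a + b - x} :=
      reflTransGen_squeezeStep_pair hx (by omega) (by omega)
    have hyz : ReflTransGen SqueezeStep {a + b - x, 0} {y, z} :=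
      reflTransGen_squeezeStep_pair (by omega) (by omega) (by omega)
    calc
      ReflTransGen SqueezeStep {a, b, 0} {x, a + b - x, 0} := by
        rw [Multiset.pair_comm b, Multiset.pair_comm (a + b - x)]
        simpa [Multiset.cons_swap] using reflTransGen_squeezeStep_cons 0 hab
      ReflTransGen SqueezeStep _ {x, y, z} := reflTransGen_squeezeStep_cons x hyz
  · have ha : ReflTransGen SqueezeStep {a, 0} {x, a - x} :=
      reflTransGen_squeezeStep_pair hx (by omega) (by omega)
    have hyz : ReflTransGen SqueezeStep {b, a - x} {y, z} :=
      reflTransGen_squeezeStep_pair (by omega) (by omega) (by omega)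
    calc
      ReflTransGen SqueezeStep {a, b, 0} {x, b, a - x} := by
        simpa [Multiset.cons_swap] using reflTransGen_squeezeStep_cons b ha
      ReflTransGen SqueezeStep _ {x, y, z} := by
        simpa [Multiset.cons_swap] using reflTransGen_squeezeStep_cons x hyz

lemma reflTransGen_squeezeStep_triple {a b x y z : ℕ} (hx : x ≤ a) (hy : y ≤ a) (hz : z ≤ a)
    (hs : x + y + z = a + b) :
    ReflTransGen SqueezeStep {a, b, 0} {x, y, z} := by
  obtain h | h | h : (y ≤ x ∧ z ≤ x) ∨ (x ≤ y ∧ z ≤ y) ∨ (x ≤ z ∧ y ≤ z) := by omega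
  · exact reflTransGen_squeezeStep_triple_of_le_left hx h.1 h.2 hs
  · rw [show ({x, y, z} : Multiset ℕ) = {y, x, z} from Multiset.cons_swap _ _ _]
    exact reflTransGen_squeezeStep_triple_of_le_left hy h.1 h.2 (by omega)
  · rw [show ({x, y, z} : Multiset ℕ) = {z, x, y} by
      rw [Multiset.pair_comm y]; exact Multiset.cons_swap _ _ _]
    exact reflTransGen_squeezeStep_triple_of_le_left hz h.1 h.2 (by omega)

end Squeezing

lemma haldane_of_coeff_ne_zero {F : Type*} [CommSemiring F] {n : ℕ}
    {p : MvPolynomial (Fin n) F} {e₀ : Fin n →₀ ℕ} (he₀ : coeff e₀ p ≠ 0)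
    (h : ∀ e, coeff e p ≠ 0 →
      Relation.ReflTransGen SqueezeStep (expMultiset e₀) (expMultiset e)) :
    Haldane p :=
  ⟨_, ⟨e₀, rfl, he₀⟩, by rintro _ ⟨e, rfl, he⟩; exact h e he⟩

lemma expMultiset_fin_zero (e : Fin 0 →₀ ℕ) : expMultiset e = 0 := rfl

lemma expMultiset_fin_one (e : Fin 1 →₀ ℕ) : expMultiset e = {e 0} := rfl

lemma expMultiset_fin_two (e : Fin 2 →₀ ℕ) : expMultiset e = {e 0, e 1} := rfl

lemma expMultiset_fin_three (e : Fin 3 →₀ ℕ) : expMultiset e = {e 0, e 1, e 2} := rfl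

noncomputable def triExp (a b c : ℕ) : Fin 3 →₀ ℕ := Finsupp.equivFunOnFinite.symm ![a, b, c]

@[simp] lemma triExp_apply_zero (a b c : ℕ) : triExp a b c 0 = a := rfl
@[simp] lemma triExp_apply_one (a b c : ℕ) : triExp a b c 1 = b := rfl
@[simp] lemma triExp_apply_two (a b c : ℕ) : triExp a b c 2 = c := rfl

lemma eq_triExp (e : Fin 3 →₀ ℕ) : e = triExp (e 0) (e 1) (e 2) := by
  ext i
  fin_cases i <;> rfl

lemma triExp_add_single (a b c : ℕ) :
    triExp a b c + Finsupp.single 0 1 = triExp (a + 1) b c ∧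
      triExp a b c + Finsupp.single 1 1 = triExp a (b + 1) c ∧
      triExp a b c + Finsupp.single 2 1 = triExp a b (c + 1) := by
  refine ⟨?_, ?_, ?_⟩ <;> ext i <;> fin_cases i <;> simp [triExp]

section FinThree

variable {F : Type*} [CommRing F] [IsDomain F] [CharZero F] {p : MvPolynomial (Fin 3) F}

lemma coeff_triExp_shift_ne_zero {m j k : ℕ} (hD : ∑ i, pderiv i p = 0)
    (hmax : ∀ e, coeff e p ≠ 0 → e 0 ≤ m) (h : coeff (triExp m j (k + 1)) p ≠ 0) :
    coeff (triExp m (j + 1) k) p ≠ 0 := by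
  have hrel := sum_coeff_add_single_mul_eq_zero hD (triExp m j k)
  obtain ⟨h₀, h₁, h₂⟩ := triExp_add_single m j k
  have hm : coeff (triExp (m + 1) j k) p = 0 := by
    by_contra hne
    simpa using hmax _ hne
  rw [Fin.sum_univ_three, h₀, h₁, h₂, hm, zero_mul, zero_add] at hrel
  intro hzero
  rw [hzero, zero_mul, zero_add, mul_eq_zero] at hrel
  exact hrel.elim h (by exact_mod_cast Nat.succ_ne_zero k)

lemma coeff_triExp_collapse_ne_zero {m : ℕ} (hD : ∑ i, pderiv i p = 0)
    (hmax : ∀ e, coeff e p ≠ 0 → e 0 ≤ m) :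
    ∀ k j, coeff (triExp m j k) p ≠ 0 → coeff (triExp m (j + k) 0) p ≠ 0
  | 0, _, h => h
  | k + 1, j, h => by
    rw [← add_assoc, add_right_comm]
    exact coeff_triExp_collapse_ne_zero hD hmax k (j + 1) (coeff_triExp_shift_ne_zero hD hmax h)

end FinThree

section Cases

variable {F : Type*} {d : ℕ}

theorem haldane_fin_zero [CommSemiring F] {p : MvPolynomial (Fin 0) F} (hp : p ≠ 0) :
    Haldane p := by
  obtain ⟨e₀, he₀⟩ := exists_coeff_ne_zero hp
  exact haldane_of_coeff_ne_zero he₀ fun e _ => by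
    rw [expMultiset_fin_zero, expMultiset_fin_zero]

theorem haldane_fin_one [CommSemiring F] {p : MvPolynomial (Fin 1) F} (hp : p ≠ 0)
    (hhom : p.IsHomogeneous d) : Haldane p := by
  obtain ⟨e₀, he₀⟩ := exists_coeff_ne_zero hp
  refine haldane_of_coeff_ne_zero he₀ fun e he => ?_
  have h₀ := hhom.sum_apply_eq he₀
  have h := hhom.sum_apply_eq he
  rw [Fin.sum_univ_one] at h h₀
  rw [expMultiset_fin_one, expMultiset_fin_one, h, h₀]

theorem haldane_fin_two [CommSemiring F] {p : MvPolynomial (Fin 2) F} (hp : p ≠ 0)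
    (hsym : p.IsSymmetric) (hhom : p.IsHomogeneous d) : Haldane p := by
  obtain ⟨e₀, he₀, hle⟩ := hsym.exists_coeff_ne_zero_forall_le hp 0
  refine haldane_of_coeff_ne_zero he₀ fun e he => ?_
  have h₀ := hhom.sum_apply_eq he₀
  have h := hhom.sum_apply_eq he
  rw [Fin.sum_univ_two] at h h₀
  rw [expMultiset_fin_two, expMultiset_fin_two]
  exact reflTransGen_squeezeStep_pair (hle e he 0) (hle e he 1) (by omega)

theorem haldane_fin_three [CommRing F] [IsDomain F] [CharZero F] {p : MvPolynomial (Fin 3) F}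
    (hp : p ≠ 0) (hsym : p.IsSymmetric) (hti : TransInv p) (hhom : p.IsHomogeneous d) :
    Haldane p := by
  obtain ⟨e₀, he₀, hle⟩ := hsym.exists_coeff_ne_zero_forall_le hp 0
  have htop : coeff (triExp (e₀ 0) (e₀ 1 + e₀ 2) 0) p ≠ 0 :=
    coeff_triExp_collapse_ne_zero hti.sum_pderiv_eq_zero (fun e he => hle e he 0) _ _
      (by rwa [← eq_triExp])
  refine haldane_of_coeff_ne_zero htop fun e he => ?_
  have h₀ := hhom.sum_apply_eq he₀
  have h := hhom.sum_apply_eq he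
  rw [Fin.sum_univ_three] at h h₀
  rw [expMultiset_fin_three, expMultiset_fin_three]
  simp only [triExp_apply_zero, triExp_apply_one, triExp_apply_two]
  exact reflTransGen_squeezeStep_triple (hle e he 0) (hle e he 1) (hle e he 2) (by omega)

end Cases

theorem stmt_7 (F : Type*) [Field F] [CharZero F] (n : ℕ) (hn : n ≤ 3)
    (p : MvPolynomial (Fin n) F) (hp : p ≠ 0) (hsym : p.IsSymmetric) (hti : TransInv p)
    (d : ℕ) (hhom : p.IsHomogeneous d) : Haldane p := by
  interval_cases n
  · exact haldane_fin_zero hp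
  · exact haldane_fin_one hp hhom
  · exact haldane_fin_two hp hsym hhom
  · exact haldane_fin_three hp hsym hti hhom
end

section
/- Let p be a nonzero homogeneous translation invariant symmetric polynomial in F[z₁,z₂,z₃]. Then every maximal element of the squeezing poset B(p) has the form [a,b,0], i.e., has smallest entry equal to 0. -/
open MvPolynomial

lemma aux_degree_eq_sum {n : ℕ} (f : Fin n →₀ ℕ) : f.degree = ∑ i, f i := by
  rw [Finsupp.degree]
  apply Finset.sum_subset (Finset.subset_univ _)
  intro i _ h
  simpa using Finsupp.notMem_support_iff.mp h

lemma aux_coeff_prod_X_add_one {n : ℕ} {F : Type*} [CommSemiring F]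
    (N : ℕ) (f : Fin n →₀ ℕ) (hf : f.degree = N) (e : Fin n →₀ ℕ) :
    coeff e (∏ i, ((X i : MvPolynomial (Fin n) F) + 1) ^ f i)
      = ((∏ i, (f i).choose (e i) : ℕ) : F) := by
  induction N generalizing f e with
  | zero =>
      have hf0 : f = 0 := by rwa [Finsupp.degree_eq_zero_iff] at hf
      subst hf0
      by_cases he : e = 0
      · subst he; simp
      · obtain ⟨i, hi⟩ : ∃ i, e i ≠ 0 := by
          by_contra h; push_neg at h; exact he (Finsupp.ext h)
        have h1 : (∏ j, ((0 : Fin n →₀ ℕ) j).choose (e j)) = 0 := by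
          apply Finset.prod_eq_zero (Finset.mem_univ i)
          simp [Nat.choose_eq_zero_of_lt (Nat.pos_of_ne_zero hi)]
        simp only [Finsupp.coe_zero, Pi.zero_apply, pow_zero, Finset.prod_const_one] at h1 ⊢
        rw [h1, coeff_one, if_neg (by exact fun h => he h.symm)]
        simp
  | succ N ih =>
      have hfne : f ≠ 0 := by
        intro h; rw [h] at hf; simp at hf
      obtain ⟨j, hj⟩ : ∃ j, f j ≠ 0 := by
        by_contra h; push_neg at h; exact hfne (Finsupp.ext h)
      set g : Fin n →₀ ℕ := f - Finsupp.single j 1 with hg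
      have hfg : ∀ i, f i = g i + (if i = j then 1 else 0) := by
        intro i
        simp only [hg, Finsupp.tsub_apply, Finsupp.single_apply]
        by_cases h : i = j
        · subst h; simp; omega
        · simp [h, Ne.symm h]
      have hgj : ∀ i, i ≠ j → g i = f i := by
        intro i hij; rw [hfg i, if_neg hij]; simp
      have hgdeg : g.degree = N := by
        rw [aux_degree_eq_sum] at hf ⊢
        have : ∑ i, f i = (∑ i, g i) + 1 := by
          rw [Finset.sum_congr rfl (fun i _ => hfg i), Finset.sum_add_distrib,
            Finset.sum_ite_eq' Finset.univ j (fun _ => 1), if_pos (Finset.mem_univ j)]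
        omega
      have hprod : (∏ i, ((X i : MvPolynomial (Fin n) F) + 1) ^ f i)
          = (X j + 1) * ∏ i, ((X i : MvPolynomial (Fin n) F) + 1) ^ g i := by
        rw [Finset.prod_congr rfl (fun i _ => by rw [hfg i, pow_add])]
        rw [Finset.prod_mul_distrib]
        have : (∏ i, ((X i : MvPolynomial (Fin n) F) + 1) ^ (if i = j then 1 else 0))
            = X j + 1 := by
          have hpow : ∀ i : Fin n, ((X i : MvPolynomial (Fin n) F) + 1) ^ (if i = j then 1 else 0)
              = if i = j then X i + 1 else 1 := by
            intro i; split <;> simp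
          rw [Finset.prod_congr rfl (fun i _ => hpow i),
            Finset.prod_ite_eq' Finset.univ j (fun i => (X i : MvPolynomial (Fin n) F) + 1),
            if_pos (Finset.mem_univ j)]
        rw [this, mul_comm]
      rw [hprod, add_mul, one_mul, coeff_add, coeff_X_mul' e j]
      rw [ih g hgdeg e]
      by_cases hej : e j = 0
      · rw [if_neg (by simp [Finsupp.mem_support_iff, hej])]
        rw [zero_add]
        congr 1
        apply Finset.prod_congr rfl
        intro i _
        by_cases h : i = j
        · subst h; rw [hej]; simp
        · rw [hgj i h]
      · rw [if_pos (by simp [Finsupp.mem_support_iff, hej])]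
        set e' : Fin n →₀ ℕ := e - Finsupp.single j 1 with he'
        rw [ih g hgdeg e']
        rw [← Nat.cast_add]
        congr 1
        rw [← Finset.mul_prod_erase Finset.univ (fun i => (g i).choose (e' i)) (Finset.mem_univ j),
            ← Finset.mul_prod_erase Finset.univ (fun i => (g i).choose (e i)) (Finset.mem_univ j),
            ← Finset.mul_prod_erase Finset.univ (fun i => (f i).choose (e i)) (Finset.mem_univ j)]
        have h2 : ∀ i ∈ Finset.univ.erase j,
            (g i).choose (e' i) = (g i).choose (e i) := by
          intro i hi
          have hij := Finset.ne_of_mem_erase hi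
          simp [he', Finsupp.tsub_apply, Finsupp.single_apply, Ne.symm hij]
        have h3 : ∀ i ∈ Finset.univ.erase j, (f i).choose (e i) = (g i).choose (e i) := by
          intro i hi; rw [hgj i (Finset.ne_of_mem_erase hi)]
        rw [Finset.prod_congr rfl h2, Finset.prod_congr rfl h3, ← add_mul]
        congr 1
        have he'j : e' j = e j - 1 := by
          simp [he', Finsupp.tsub_apply, Finsupp.single_apply]
        have hfgj : f j = g j + 1 := by
          have := hfg j; simpa using this
        obtain ⟨k, hk⟩ : ∃ k, e j = k + 1 := ⟨e j - 1, by omega⟩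
        rw [he'j, hk, hfgj, Nat.choose_succ_succ' (g j) k]
        simp

lemma aux_coeff_aeval_shift {n : ℕ} {F : Type*} [CommSemiring F]
    (p : MvPolynomial (Fin n) F) (e : Fin n →₀ ℕ) :
    coeff e (aeval (fun i : Fin n => X i + C 1) p)
      = ∑ f ∈ p.support, coeff f p * ((∏ i, (f i).choose (e i) : ℕ) : F) := by
  conv_lhs => rw [p.as_sum, map_sum]
  rw [coeff_sum]
  apply Finset.sum_congr rfl
  intro f hf
  rw [aeval_monomial]
  have h1 : (f.prod fun i k => ((fun i : Fin n => (X i : MvPolynomial (Fin n) F) + C 1) i) ^ k)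
      = ∏ i, ((X i : MvPolynomial (Fin n) F) + 1) ^ f i := by
    rw [Finsupp.prod]
    apply Finset.prod_subset (Finset.subset_univ _)
    intro i _ hi
    rw [Finsupp.notMem_support_iff.mp hi, pow_zero]
  rw [h1, algebraMap_eq, coeff_C_mul, aux_coeff_prod_X_add_one f.degree f rfl e]

lemma aux_euler (F : Type*) [Field F] [CharZero F]
    (p : MvPolynomial (Fin 3) F) (hti : TransInv p)
    (d : ℕ) (hhom : p.IsHomogeneous d)
    (e : Fin 3 →₀ ℕ) (hdeg : e.degree + 1 = d) :
    ∑ j : Fin 3, coeff (e + Finsupp.single j 1) p * ((e j + 1 : ℕ) : F) = 0 := by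
  have h0 : coeff e p = 0 := hhom.coeff_eq_zero (by omega)
  have h1 : (∑ f ∈ p.support, coeff f p * ((∏ i, (f i).choose (e i) : ℕ) : F)) = 0 := by
    rw [← aux_coeff_aeval_shift p e, hti 1, h0]
  set T : Finset (Fin 3 →₀ ℕ) := Finset.image (fun j => e + Finsupp.single j 1) Finset.univ with hT
  have claimA : ∀ f ∈ p.support, f ∉ T → (∏ i, (f i).choose (e i)) = 0 := by
    intro f hfs hfT
    by_contra hne
    have hle : ∀ i, e i ≤ f i := by
      intro i
      by_contra hlt
      push_neg at hlt
      exact hne (Finset.prod_eq_zero (Finset.mem_univ i) (Nat.choose_eq_zero_of_lt hlt))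
    have hfd : f.degree = d := by
      by_contra h
      exact (mem_support_iff.mp hfs) (hhom.coeff_eq_zero h)
    have hsum : f 0 + f 1 + f 2 = e 0 + e 1 + e 2 + 1 := by
      have h1 := aux_degree_eq_sum f
      have h2 := aux_degree_eq_sum e
      rw [Fin.sum_univ_three] at h1 h2
      omega
    have : ∃ j : Fin 3, f = e + Finsupp.single j 1 := by
      have h0 := hle 0; have h1 := hle 1; have h2 := hle 2
      rcases (by omega : f 0 = e 0 + 1 ∧ f 1 = e 1 ∧ f 2 = e 2 ∨
          f 0 = e 0 ∧ f 1 = e 1 + 1 ∧ f 2 = e 2 ∨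
          f 0 = e 0 ∧ f 1 = e 1 ∧ f 2 = e 2 + 1) with h | h | h
      · exact ⟨0, by ext i; fin_cases i <;> simp [Finsupp.single_apply] <;> omega⟩
      · exact ⟨1, by ext i; fin_cases i <;> simp [Finsupp.single_apply] <;> omega⟩
      · exact ⟨2, by ext i; fin_cases i <;> simp [Finsupp.single_apply] <;> omega⟩
    obtain ⟨j, rfl⟩ := this
    exact hfT (Finset.mem_image_of_mem _ (Finset.mem_univ j))
  have hchoose : ∀ j : Fin 3, (∏ i, (((e + Finsupp.single j 1 : Fin 3 →₀ ℕ)) i).choose (e i)) = e j + 1 := by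
    intro j
    rw [Finset.prod_eq_single j]
    · simp [Finsupp.single_apply, Nat.choose_succ_self_right]
    · intro i _ hij
      simp [Finsupp.single_apply, Ne.symm hij, Nat.choose_self]
    · exact fun h => absurd (Finset.mem_univ j) h
  have step1 : (∑ f ∈ p.support, coeff f p * ((∏ i, (f i).choose (e i) : ℕ) : F))
      = ∑ f ∈ p.support ∪ T, coeff f p * ((∏ i, (f i).choose (e i) : ℕ) : F) := by
    apply Finset.sum_subset Finset.subset_union_left
    intro f _ hf
    rw [notMem_support_iff.mp hf, zero_mul]
  have step2 : (∑ f ∈ p.support ∪ T, coeff f p * ((∏ i, (f i).choose (e i) : ℕ) : F))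
      = ∑ f ∈ T, coeff f p * ((∏ i, (f i).choose (e i) : ℕ) : F) := by
    symm
    apply Finset.sum_subset Finset.subset_union_right
    intro f hfu hfT
    rcases Finset.mem_union.mp hfu with hfs | hfs
    · rw [claimA f hfs hfT]; simp
    · exact absurd hfs hfT
  have hinj : Set.InjOn (fun j : Fin 3 => e + Finsupp.single j 1) (Finset.univ : Finset (Fin 3)) := by
    intro a _ b _ hab
    simp only [add_right_inj] at hab
    exact Finsupp.single_left_injective one_ne_zero hab
  have step3 : (∑ f ∈ T, coeff f p * ((∏ i, (f i).choose (e i) : ℕ) : F))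
      = ∑ j : Fin 3, coeff (e + Finsupp.single j 1) p * ((e j + 1 : ℕ) : F) := by
    rw [hT, Finset.sum_image hinj]
    apply Finset.sum_congr rfl
    intro j _
    rw [hchoose j]
  rw [← step3, ← step2, ← step1, h1]

theorem stmt_9 (F : Type*) [Field F] [CharZero F]
    (p : MvPolynomial (Fin 3) F) (hp : p ≠ 0) (hsym : p.IsSymmetric) (hti : TransInv p)
    (d : ℕ) (hhom : p.IsHomogeneous d)
    (m : Multiset ℕ) (hm : m ∈ BSet p) (hmax : ∀ s ∈ BSet p, ¬ Squeezes s m) :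
    (0 : ℕ) ∈ m := by
  by_contra h0m
  obtain ⟨d0, hd0, hc0⟩ := hm
  rw [expMultiset] at hd0
  have hpos : ∀ i, d0 i ≠ 0 := by
    intro i hi
    apply h0m
    rw [← hd0, ← hi]
    exact Multiset.mem_map_of_mem _ (Finset.mem_univ_val i)
  obtain ⟨k, -, hk⟩ := Finset.exists_min_image (Finset.univ : Finset (Fin 3)) d0 ⟨0, Finset.mem_univ 0⟩
  set e : Fin 3 →₀ ℕ := d0 - Finsupp.single k 1 with he
  have heval : ∀ i, e i = d0 i - (if k = i then 1 else 0) := by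
    intro i; rw [he, Finsupp.tsub_apply, Finsupp.single_apply]
  have hek : e + Finsupp.single k 1 = d0 := by
    ext i
    rw [Finsupp.add_apply, heval i, Finsupp.single_apply]
    have := hpos i
    split <;> omega
  have hd0deg : d0.degree = d := by
    by_contra h
    exact hc0 (hhom.coeff_eq_zero h)
  have h3 : ∀ i', d0 i' = e i' + (if k = i' then 1 else 0) := by
    intro i'; rw [← hek, Finsupp.add_apply, Finsupp.single_apply]
  have hedeg : e.degree + 1 = d := by
    have h1 := aux_degree_eq_sum e
    rw [Fin.sum_univ_three] at h1
    rw [aux_degree_eq_sum d0, Fin.sum_univ_three] at hd0deg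
    have h30 := h3 0
    have h31 := h3 1
    have h32 := h3 2
    fin_cases k <;> simp only [Fin.isValue, Fin.zero_eta, Fin.mk_one, if_true, if_false,
      show ((0:Fin 3) = 1) = False by simp, show ((0:Fin 3) = 2) = False by simp,
      show ((1:Fin 3) = 0) = False by simp, show ((1:Fin 3) = 2) = False by simp,
      show ((2:Fin 3) = 0) = False by simp, show ((2:Fin 3) = 1) = False by simp,
      eq_self_iff_true] at h30 h31 h32 <;> simp at h30 h31 h32 <;> omega
  have hrel := aux_euler F p hti d hhom e hedeg
  have hterm : coeff (e + Finsupp.single k 1) p * ((e k + 1 : ℕ) : F) ≠ 0 := by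
    rw [hek]
    apply mul_ne_zero hc0
    exact Nat.cast_ne_zero.mpr (e k).succ_ne_zero
  have hex : ∃ j, j ≠ k ∧ coeff (e + Finsupp.single j 1) p ≠ 0 := by
    by_contra h
    push_neg at h
    apply hterm
    rw [← hrel]
    symm
    apply Finset.sum_eq_single k
    · intro j _ hjk
      rw [h j hjk, zero_mul]
    · exact fun h' => absurd (Finset.mem_univ k) h'
  obtain ⟨j, hjk, hcj⟩ := hex
  set f : Fin 3 →₀ ℕ := e + Finsupp.single j 1 with hf
  obtain ⟨i, hij, hik, huniv⟩ : ∃ i : Fin 3, i ≠ j ∧ i ≠ k ∧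
      (Finset.univ.val : Multiset (Fin 3)) = j ::ₘ k ::ₘ {i} := by
    fin_cases j <;> fin_cases k <;> first | exact absurd rfl hjk | decide
  have hfval : ∀ i', f i' = (d0 i' - (if k = i' then 1 else 0)) + (if j = i' then 1 else 0) := by
    intro i'
    rw [hf, Finsupp.add_apply, heval i', Finsupp.single_apply]
  have hfj : f j = d0 j + 1 := by rw [hfval j]; simp [Ne.symm hjk]
  have hfk : f k = d0 k - 1 := by rw [hfval k]; simp [hjk]
  have hfi : f i = d0 i := by rw [hfval i]; simp [Ne.symm hij, Ne.symm hik]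
  have hs : Multiset.map f Finset.univ.val = (d0 j + 1) ::ₘ (d0 k - 1) ::ₘ {d0 i} := by
    rw [huniv]
    simp [hfj, hfk, hfi]
  have hmm : m = d0 j ::ₘ d0 k ::ₘ {d0 i} := by
    rw [← hd0, huniv]; simp
  apply hmax (expMultiset f) ⟨f, rfl, hcj⟩
  apply Relation.TransGen.single
  refine ⟨{d0 i}, d0 j + 1, d0 k - 1, ?_, ?_, ?_⟩
  · have h1 := hk j (Finset.mem_univ j)
    have h2 := hpos k
    omega
  · rw [expMultiset, hs]
  · rw [hmm]
    have h1 : d0 j + 1 - 1 = d0 j := by omega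
    have h2 : d0 k - 1 + 1 = d0 k := by have := hpos k; omega
    rw [h1, h2]
end
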